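/- arXiv:1611.08045 — 3 statements merged into one kernel-verified Lean document; each statement's English description precedes it below -/
import Mathlib

section
/- Let a, a', a₁, a₁', n, n' be positive integers and q, q' integers satisfying q·(a·n + a₁) + a·(a'·n' + a₁') = 1 and a'·(a·n + a₁) + q'·(a'·n' + a₁') = 1. Set k = a·a' − q·q'. Then k·(a'·n' + a₁') = a' − q and k·(a·n + a₁) = a − q', and k ≥ 1. -/
/-!
Writing `S = a n + a₁` and `T = a' n' + a₁'`, the hypotheses are the linear system
`q S + a T = 1`, `a' S + q' T = 1`, and Cramer's rule gives, with `k = a a' - q q'`, `k T = a' - q`, `k S = a - q'`.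
Since `a' S ≥ 2`, the second equation forces `q' < 0`, so `k S = a - q' > 0` and `k ≥ 1`.
-/

section Cramer

variable {R : Type*} [CommRing R] {q a a' q' x y : R}

theorem cramer_two_snd (h₁ : q * x + a * y = 1) (h₂ : a' * x + q' * y = 1) :
    (a * a' - q * q') * y = a' - q := by
  linear_combination a' * h₁ - q * h₂

theorem cramer_two_fst (h₁ : q * x + a * y = 1) (h₂ : a' * x + q' * y = 1) :
    (a * a' - q * q') * x = a - q' := by
  linear_combination a * h₂ - q' * h₁

end Cramer

theorem neg_of_add_mul_eq_one {R : Type*} [CommRing R] [LinearOrder R] [IsStrictOrderedRing R]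
    {u c y : R} (hu : 1 < u) (hy : 0 < y) (h : u + c * y = 1) : c < 0 :=
  neg_of_mul_neg_left (b := y) (by linarith) hy.le

theorem stmt_9 (a a' a1 a1' n n' q q' : ℤ)
    (ha : 0 < a) (ha' : 0 < a') (ha1 : 0 < a1) (ha1' : 0 < a1')
    (hn : 0 < n) (hn' : 0 < n')
    (h1 : q * (a * n + a1) + a * (a' * n' + a1') = 1)
    (h2 : a' * (a * n + a1) + q' * (a' * n' + a1') = 1) :
    (a * a' - q * q') * (a' * n' + a1') = a' - q ∧
    (a * a' - q * q') * (a * n + a1) = a - q' ∧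
    1 ≤ a * a' - q * q' := by
  have hS : 1 < a * n + a1 := by linarith [mul_pos ha hn]
  have hT : 0 < a' * n' + a1' := by positivity
  have hq' : q' < 0 :=
    neg_of_add_mul_eq_one (hS.trans_le (le_mul_of_one_le_left (by omega) ha')) hT h2
  have hkS := cramer_two_fst h1 h2
  refine ⟨cramer_two_snd h1 h2, hkS, ?_⟩
  have hk : 0 < a * a' - q * q' :=
    pos_of_mul_pos_left (b := a * n + a1) (by rw [hkS]; omega) (by omega)
  omega
end

section
/- Let a, a', a₁, a₁', n, n' be positive integers and q, q' integers satisfying q·(a·n + a₁) + a·(a'·n' + a₁') = 1 and a'·(a·n + a₁) + q'·(a'·n' + a₁') = 1. Then a·a' − q·q' = 1 and (n = 1 or n' = 1). -/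
/-!
Put `P = a n + a₁`, `P' = a' n' + a₁'` and `k = a a' - q q'`. Eliminating between the two
Bézout-type relations gives `k P P' = a' P + a P' - 1`. Since `a < P` and `a' < P'`, the right-hand
side lies strictly between `0` and `2 P P'`, so `k = 1`. Then the relation rearranges to
`(P - a)(P' - a') = a a' - 1`, while `n, n' ≥ 2` would give `P - a > a` and `P' - a' > a'`.
-/

theorem det_mul_mul_eq_of_bezout {a a' q q' P P' : ℤ}
    (h1 : q * P + a * P' = 1) (h2 : a' * P + q' * P' = 1) :
    (a * a' - q * q') * (P * P') = a' * P + a * P' - 1 := by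
  linear_combination (a' * P - 1) * h1 - q * P * h2

theorem eq_one_of_mul_mul_eq {k a a' P P' : ℤ} (ha : 0 < a) (ha' : 0 < a')
    (hP : a < P) (hP' : a' < P') (h : k * (P * P') = a' * P + a * P' - 1) : k = 1 := by
  have hPP' : 0 < P * P' := mul_pos (ha.trans hP) (ha'.trans hP')
  have hpos : 0 * (P * P') < k * (P * P') := by nlinarith
  have hlt : k * (P * P') < 2 * (P * P') := by nlinarith
  have := lt_of_mul_lt_mul_right hpos hPP'.le
  have := lt_of_mul_lt_mul_right hlt hPP'.le
  omega

theorem stmt_10 (a a' a1 a1' n n' q q' : ℤ)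
    (ha : 0 < a) (ha' : 0 < a') (ha1 : 0 < a1) (ha1' : 0 < a1')
    (hn : 0 < n) (hn' : 0 < n')
    (h1 : q * (a * n + a1) + a * (a' * n' + a1') = 1)
    (h2 : a' * (a * n + a1) + q' * (a' * n' + a1') = 1) :
    a * a' - q * q' = 1 ∧ (n = 1 ∨ n' = 1) := by
  have hdet := det_mul_mul_eq_of_bezout h1 h2
  have hk : a * a' - q * q' = 1 :=
    eq_one_of_mul_mul_eq ha ha' (by nlinarith) (by nlinarith) hdet
  refine ⟨hk, ?_⟩
  rw [hk, one_mul] at hdet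
  have hprod : (a * n + a1 - a) * (a' * n' + a1' - a') = a * a' - 1 := by
    linear_combination hdet
  by_contra! hne
  have hgap : a < a * n + a1 - a := by nlinarith [show 2 ≤ n by omega]
  have hgap' : a' < a' * n' + a1' - a' := by nlinarith [show 2 ≤ n' by omega]
  linarith [mul_lt_mul'' hgap hgap' ha.le ha'.le]
end

section
/- Let a, a', a₁, a₁', n, n', k, q, q' be integers with a, a', a₁, a₁', n, n', k positive, such that q = a'·(1 − k·n') − k·a₁', q' = a·(1 − k·n) − k·a₁, and k = a·a' − q·q'. Then a·a'·(k·n·n' − n − n') = a·a₁'·(1 − k·n) + a'·a₁·(1 − k·n') − k·a₁·a₁' − 1, and consequently k·n·n' − n − n' ≤ −1. -/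
/-!
Expanding `q * q'` shows `a * a' - q * q' = k * (1 + E)`, where `E` is the difference of the two
sides of the identity; so `k = a * a' - q * q'` with `k ≠ 0` forces `E = 0`. On the right-hand
side of the identity every term other than `-1` is non-positive once `k * n ≥ 1` and `k * n' ≥ 1`,
so `a * a' * (k * n * n' - n - n') ≤ -1`, and positivity of `a * a'` gives the bound.
-/

theorem mul_mul_sub_sub_eq_of_eq_mul_sub_mul {R : Type*} [CommRing R] [IsDomain R]
    {a a' a1 a1' n n' k q q' : R} (hk : k ≠ 0)
    (hq : q = a' * (1 - k * n') - k * a1') (hq' : q' = a * (1 - k * n) - k * a1)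
    (hkk : k = a * a' - q * q') :
    a * a' * (k * n * n' - n - n') =
      a * a1' * (1 - k * n) + a' * a1 * (1 - k * n') - k * a1 * a1' - 1 := by
  refine mul_left_cancel₀ hk ?_
  subst hq hq'
  linear_combination hkk

theorem mul_sub_add_mul_sub_sub_sub_one_le_neg_one {R : Type*} [CommRing R] [LinearOrder R]
    [IsStrictOrderedRing R] {a a' a1 a1' n n' k : R}
    (ha : 0 ≤ a) (ha' : 0 ≤ a') (ha1 : 0 ≤ a1) (ha1' : 0 ≤ a1') (hk : 0 ≤ k)
    (hkn : 1 ≤ k * n) (hkn' : 1 ≤ k * n') :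
    a * a1' * (1 - k * n) + a' * a1 * (1 - k * n') - k * a1 * a1' - 1 ≤ -1 := by
  have h₁ : a * a1' * (1 - k * n) ≤ 0 :=
    mul_nonpos_of_nonneg_of_nonpos (mul_nonneg ha ha1') (sub_nonpos.2 hkn)
  have h₂ : a' * a1 * (1 - k * n') ≤ 0 :=
    mul_nonpos_of_nonneg_of_nonpos (mul_nonneg ha' ha1) (sub_nonpos.2 hkn')
  have h₃ : 0 ≤ k * a1 * a1' := mul_nonneg (mul_nonneg hk ha1) ha1'
  linarith

theorem stmt_11 (a a' a1 a1' n n' k q q' : ℤ)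
    (ha : 0 < a) (ha' : 0 < a') (ha1 : 0 < a1) (ha1' : 0 < a1')
    (hn : 0 < n) (hn' : 0 < n') (hk : 0 < k)
    (hq : q = a' * (1 - k * n') - k * a1')
    (hq' : q' = a * (1 - k * n) - k * a1)
    (hkk : k = a * a' - q * q') :
    a * a' * (k * n * n' - n - n') =
      a * a1' * (1 - k * n) + a' * a1 * (1 - k * n') - k * a1 * a1' - 1 ∧
    k * n * n' - n - n' ≤ -1 := by
  have hid := mul_mul_sub_sub_eq_of_eq_mul_sub_mul hk.ne' hq hq' hkk
  refine ⟨hid, ?_⟩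
  have hkn : 1 ≤ k * n := mul_pos hk hn
  have hkn' : 1 ≤ k * n' := mul_pos hk hn'
  have hle := mul_sub_add_mul_sub_sub_sub_one_le_neg_one ha.le ha'.le ha1.le ha1'.le hk.le hkn hkn'
  have hneg : k * n * n' - n - n' < 0 :=
    neg_of_mul_neg_right (hid ▸ hle.trans_lt (by norm_num)) (mul_pos ha ha').le
  omega
end
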